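/- Let k be a field of characteristic zero, q ∈ k \ {0,1}, a ∈ k[h] monic of degree N > 1, B the Smith algebra with relations HY = qYH, [X,Y] = a(qH) − a(H), XH = qHX, and Ω = YX − a(H). Then the quotient B/(Ω) is isomorphic to the generalized Weyl algebra A(a,q), via the map sending the classes of Y, H, X to y, h, x. -/

import Mathlib

open Polynomial

/-- Generators: `ι 0 = Y`, `ι 1 = H`, `ι 2 = X`. Defining relations of the
Smith algebra `B_l` with `l(H) = a(qH) − a(H)`:
`HY = q·YH`, `XY − YX = l(H)`, `XH = q·HX`. -/
inductive smithRel (k : Type*) [CommRing k] (q : k) (a : Polynomial k) :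
    FreeAlgebra k (Fin 3) → FreeAlgebra k (Fin 3) → Prop
  | hy : smithRel k q a (FreeAlgebra.ι k 1 * FreeAlgebra.ι k 0)
      (q • (FreeAlgebra.ι k 0 * FreeAlgebra.ι k 1))
  | xy : smithRel k q a (FreeAlgebra.ι k 2 * FreeAlgebra.ι k 0)
      (FreeAlgebra.ι k 0 * FreeAlgebra.ι k 2 +
        (Polynomial.aeval (q • FreeAlgebra.ι k 1) a -
          Polynomial.aeval (FreeAlgebra.ι k 1) a))
  | xh : smithRel k q a (FreeAlgebra.ι k 2 * FreeAlgebra.ι k 1)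
      (q • (FreeAlgebra.ι k 1 * FreeAlgebra.ι k 2))

/-- The Smith algebra `B` associated to `q` and `a`. -/
abbrev Smith (k : Type*) [CommRing k] (q : k) (a : Polynomial k) :=
  RingQuot (smithRel k q a)

/-- `Y ∈ B`. -/
noncomputable def Smith.Y (k : Type*) [CommRing k] (q : k) (a : Polynomial k) :
    Smith k q a :=
  RingQuot.mkAlgHom k (smithRel k q a) (FreeAlgebra.ι k 0)

/-- `H ∈ B`. -/
noncomputable def Smith.H (k : Type*) [CommRing k] (q : k) (a : Polynomial k) :
    Smith k q a :=
  RingQuot.mkAlgHom k (smithRel k q a) (FreeAlgebra.ι k 1)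

/-- `X ∈ B`. -/
noncomputable def Smith.X (k : Type*) [CommRing k] (q : k) (a : Polynomial k) :
    Smith k q a :=
  RingQuot.mkAlgHom k (smithRel k q a) (FreeAlgebra.ι k 2)

/-- `Ω = YX − a(H) ∈ B`. -/
noncomputable def Smith.Omega (k : Type*) [CommRing k] (q : k) (a : Polynomial k) :
    Smith k q a :=
  Smith.Y k q a * Smith.X k q a - Polynomial.aeval (Smith.H k q a) a

/-- Generators: `ι 0 = y`, `ι 1 = h`, `ι 2 = x`. Defining relations of the
quantum generalized Weyl algebra `A(a,q)`:
`xh = q·hx`, `hy = q·yh`, `yx = a(h)`, `xy = a(qh)`. -/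
inductive gwaRel (k : Type*) [CommRing k] (q : k) (a : k[X]) :
    FreeAlgebra k (Fin 3) → FreeAlgebra k (Fin 3) → Prop
  | xh : gwaRel k q a (FreeAlgebra.ι k 2 * FreeAlgebra.ι k 1)
      (q • (FreeAlgebra.ι k 1 * FreeAlgebra.ι k 2))
  | hy : gwaRel k q a (FreeAlgebra.ι k 1 * FreeAlgebra.ι k 0)
      (q • (FreeAlgebra.ι k 0 * FreeAlgebra.ι k 1))
  | yx : gwaRel k q a (FreeAlgebra.ι k 0 * FreeAlgebra.ι k 2)
      (aeval (FreeAlgebra.ι k 1) a)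
  | xy : gwaRel k q a (FreeAlgebra.ι k 2 * FreeAlgebra.ι k 0)
      (aeval (q • FreeAlgebra.ι k 1) a)

/-- The quantum generalized Weyl algebra `A(a,q)`. -/
abbrev GWA (k : Type*) [CommRing k] (q : k) (a : k[X]) := RingQuot (gwaRel k q a)


/-! Both `B/(Ω)` and `A(a,q)` are quotients of the free algebra on `y, h, x`, and each set of
defining relations holds in the other quotient: in `B/(Ω)` we get `yx = a(h)` from `Ω = 0`,
hence `xy = yx + a(qh) − a(h) = a(qh)`; in `A(a,q)` we get `xy − yx = a(qh) − a(h)` and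
`Ω ↦ yx − a(h) = 0`. So the identity of the free algebra induces mutually inverse algebra
maps. -/

section

variable {k : Type*} [CommRing k] {q : k} {a : k[X]}

variable (k q a) in
lemma Smith.Omega_eq_mkAlgHom :
    Smith.Omega k q a = RingQuot.mkAlgHom k (smithRel k q a)
      (FreeAlgebra.ι k 0 * FreeAlgebra.ι k 2 - aeval (FreeAlgebra.ι k 1) a) := by
  simp only [Smith.Omega, Smith.Y, Smith.X, Smith.H, map_sub, map_mul, aeval_algHom_apply]

lemma GWA.mkAlgHom_of_smithRel ⦃u v : FreeAlgebra k (Fin 3)⦄ (h : smithRel k q a u v) :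
    RingQuot.mkAlgHom k (gwaRel k q a) u = RingQuot.mkAlgHom k (gwaRel k q a) v := by
  cases h with
  | hy => exact RingQuot.mkAlgHom_rel k gwaRel.hy
  | xh => exact RingQuot.mkAlgHom_rel k gwaRel.xh
  | xy =>
    rw [RingQuot.mkAlgHom_rel k gwaRel.xy, map_add, RingQuot.mkAlgHom_rel k gwaRel.yx, map_sub,
      add_sub_cancel]

lemma GWA.mkAlgHom_Omega :
    RingQuot.mkAlgHom k (gwaRel k q a)
      (FreeAlgebra.ι k 0 * FreeAlgebra.ι k 2 - aeval (FreeAlgebra.ι k 1) a) = 0 := by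
  rw [map_sub, RingQuot.mkAlgHom_rel k gwaRel.yx, sub_self]

variable (k q a) in
abbrev SmithQuot :=
  RingQuot (fun u v : Smith k q a => u = Smith.Omega k q a ∧ v = 0)

variable (k q a) in
noncomputable def SmithQuot.mk : FreeAlgebra k (Fin 3) →ₐ[k] SmithQuot k q a :=
  (RingQuot.mkAlgHom k _).comp (RingQuot.mkAlgHom k (smithRel k q a))

lemma SmithQuot.algHom_ext {A : Type*} [Semiring A] [Algebra k A]
    {f g : SmithQuot k q a →ₐ[k] A}
    (h : f.comp (SmithQuot.mk k q a) = g.comp (SmithQuot.mk k q a)) : f = g :=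
  RingQuot.ringQuot_ext' k _ _ <| RingQuot.ringQuot_ext' k _ _ h

lemma SmithQuot.mk_of_smithRel ⦃u v : FreeAlgebra k (Fin 3)⦄ (h : smithRel k q a u v) :
    SmithQuot.mk k q a u = SmithQuot.mk k q a v :=
  congrArg (RingQuot.mkAlgHom k _) (RingQuot.mkAlgHom_rel k h)

lemma SmithQuot.mk_Omega :
    SmithQuot.mk k q a
      (FreeAlgebra.ι k 0 * FreeAlgebra.ι k 2 - aeval (FreeAlgebra.ι k 1) a) = 0 := by
  rw [SmithQuot.mk, AlgHom.comp_apply, ← Smith.Omega_eq_mkAlgHom,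
    RingQuot.mkAlgHom_rel k ⟨rfl, rfl⟩, map_zero]

lemma SmithQuot.mk_y_mul_x :
    SmithQuot.mk k q a (FreeAlgebra.ι k 0 * FreeAlgebra.ι k 2) =
      SmithQuot.mk k q a (aeval (FreeAlgebra.ι k 1) a) :=
  sub_eq_zero.mp ((map_sub _ _ _).symm.trans SmithQuot.mk_Omega)

lemma SmithQuot.mk_of_gwaRel ⦃u v : FreeAlgebra k (Fin 3)⦄ (h : gwaRel k q a u v) :
    SmithQuot.mk k q a u = SmithQuot.mk k q a v := by
  cases h with
  | xh => exact SmithQuot.mk_of_smithRel smithRel.xh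
  | hy => exact SmithQuot.mk_of_smithRel smithRel.hy
  | yx => exact SmithQuot.mk_y_mul_x
  | xy =>
    rw [SmithQuot.mk_of_smithRel smithRel.xy, map_add, SmithQuot.mk_y_mul_x, ← map_add,
      add_sub_cancel]

variable (k q a) in
noncomputable def Smith.toGWA : Smith k q a →ₐ[k] GWA k q a :=
  RingQuot.liftAlgHom k ⟨RingQuot.mkAlgHom k (gwaRel k q a), GWA.mkAlgHom_of_smithRel⟩

variable (k q a) in
noncomputable def SmithQuot.toGWA : SmithQuot k q a →ₐ[k] GWA k q a :=
  RingQuot.liftAlgHom k ⟨Smith.toGWA k q a, by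
    rintro _ _ ⟨rfl, rfl⟩
    rw [Smith.Omega_eq_mkAlgHom, Smith.toGWA, RingQuot.liftAlgHom_mkAlgHom_apply,
      GWA.mkAlgHom_Omega, map_zero]⟩

lemma SmithQuot.toGWA_mk (u : FreeAlgebra k (Fin 3)) :
    SmithQuot.toGWA k q a (SmithQuot.mk k q a u) = RingQuot.mkAlgHom k (gwaRel k q a) u := by
  rw [SmithQuot.mk, AlgHom.comp_apply, SmithQuot.toGWA, RingQuot.liftAlgHom_mkAlgHom_apply,
    Smith.toGWA, RingQuot.liftAlgHom_mkAlgHom_apply]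

variable (k q a) in
noncomputable def GWA.toSmithQuot : GWA k q a →ₐ[k] SmithQuot k q a :=
  RingQuot.liftAlgHom k ⟨SmithQuot.mk k q a, SmithQuot.mk_of_gwaRel⟩

lemma GWA.toSmithQuot_mkAlgHom (u : FreeAlgebra k (Fin 3)) :
    GWA.toSmithQuot k q a (RingQuot.mkAlgHom k (gwaRel k q a) u) = SmithQuot.mk k q a u :=
  RingQuot.liftAlgHom_mkAlgHom_apply _ _ _ _

variable (k q a) in
noncomputable def SmithQuot.equivGWA : SmithQuot k q a ≃ₐ[k] GWA k q a :=
  AlgEquiv.ofAlgHom (SmithQuot.toGWA k q a) (GWA.toSmithQuot k q a)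
    (RingQuot.ringQuot_ext' k _ _ <| AlgHom.ext fun u => by
      simp only [AlgHom.comp_apply, GWA.toSmithQuot_mkAlgHom, SmithQuot.toGWA_mk,
        AlgHom.id_apply])
    (SmithQuot.algHom_ext <| AlgHom.ext fun u => by
      simp only [AlgHom.comp_apply, SmithQuot.toGWA_mk, GWA.toSmithQuot_mkAlgHom,
        AlgHom.id_apply])

lemma SmithQuot.equivGWA_mk (u : FreeAlgebra k (Fin 3)) :
    SmithQuot.equivGWA k q a (SmithQuot.mk k q a u) = RingQuot.mkAlgHom k (gwaRel k q a) u :=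
  SmithQuot.toGWA_mk u

end

theorem smith_quot_iso_gwa_general (k : Type*) [Field k] (q : k) (a : k[X]) :
    ∃ Φ : RingQuot (fun u v : Smith k q a => u = Smith.Omega k q a ∧ v = 0)
          ≃ₐ[k] GWA k q a,
      Φ (RingQuot.mkAlgHom k _ (Smith.Y k q a)) =
        RingQuot.mkAlgHom k (gwaRel k q a) (FreeAlgebra.ι k 0) ∧
      Φ (RingQuot.mkAlgHom k _ (Smith.H k q a)) =
        RingQuot.mkAlgHom k (gwaRel k q a) (FreeAlgebra.ι k 1) ∧
      Φ (RingQuot.mkAlgHom k _ (Smith.X k q a)) =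
        RingQuot.mkAlgHom k (gwaRel k q a) (FreeAlgebra.ι k 2) :=
  ⟨SmithQuot.equivGWA k q a, SmithQuot.equivGWA_mk _, SmithQuot.equivGWA_mk _,
    SmithQuot.equivGWA_mk _⟩

/-- Quotienting the Smith algebra `B` by the two-sided ideal generated by the
central element `Ω = YX − a(H)` yields the generalized Weyl algebra `A(a,q)`,
via an isomorphism sending the classes of `Y`, `H`, `X` to `y`, `h`, `x`. -/
theorem smith_quot_iso_gwa (k : Type*) [Field k] [CharZero k] (q : k)
    (hq0 : q ≠ 0) (hq1 : q ≠ 1) (a : k[X]) (hmonic : a.Monic)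
    (hdeg : 1 < a.natDegree) :
    ∃ Φ : RingQuot (fun u v : Smith k q a => u = Smith.Omega k q a ∧ v = 0)
          ≃ₐ[k] GWA k q a,
      Φ (RingQuot.mkAlgHom k _ (Smith.Y k q a)) =
        RingQuot.mkAlgHom k (gwaRel k q a) (FreeAlgebra.ι k 0) ∧
      Φ (RingQuot.mkAlgHom k _ (Smith.H k q a)) =
        RingQuot.mkAlgHom k (gwaRel k q a) (FreeAlgebra.ι k 1) ∧
      Φ (RingQuot.mkAlgHom k _ (Smith.X k q a)) =
        RingQuot.mkAlgHom k (gwaRel k q a) (FreeAlgebra.ι k 2) :=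
  smith_quot_iso_gwa_general k q a
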